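/- arXiv:2004.03026 — 4 statements merged into one kernel-verified Lean document; each statement's English description precedes it below -/
import Mathlib

section
/- In T_{3m}, the set {x^i y : 0 ≤ i ≤ m-1} of all elements of the form x^i y forms a single conjugacy class, and similarly the set {x^i y^{-1} : 0 ≤ i ≤ m-1} forms a single conjugacy class. -/
/-- Relations of the presentation `T_{3m} = ⟨x, y | x^m = y^3 = 1, y⁻¹xy = x^t⟩`. -/
def T3mRels (m t : ℕ) : Set (FreeGroup (Fin 2)) :=
  {FreeGroup.of 0 ^ m, FreeGroup.of 1 ^ 3,
   (FreeGroup.of 1)⁻¹ * FreeGroup.of 0 * FreeGroup.of 1 * (FreeGroup.of 0 ^ t)⁻¹}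

/-- The group `T_{3m}` given by the presentation `⟨x, y | x^m = y^3 = 1, y⁻¹xy = x^t⟩`. -/
abbrev T3m (m t : ℕ) : Type := PresentedGroup (T3mRels m t)

/-- The generator `x` of `T_{3m}`. -/
def xg (m t : ℕ) : T3m m t := PresentedGroup.of 0

/-- The generator `y` of `T_{3m}`. -/
def yg (m t : ℕ) : T3m m t := PresentedGroup.of 1

private lemma coprime_aux (m t : ℕ) (ht1 : 1 ≤ t)
    (ht : t ^ 3 % m = 1 % m) (hgcd : Nat.gcd m (t - 1) = 1) :
    Nat.gcd m (t ^ 2 - 1) = 1 := by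
  obtain ⟨s, rfl⟩ : ∃ s, t = s + 1 := ⟨t - 1, by omega⟩
  have hs : Nat.Coprime m s := by simpa using hgcd
  have hdvd : m ∣ (s + 1) ^ 3 - 1 :=
    (Nat.modEq_iff_dvd' (Nat.one_le_pow _ _ (by omega))).mp (Nat.ModEq.symm ht)
  have h1 : (s + 1) ^ 3 - 1 = (s * s + 3 * s + 3) * s := by
    have : (s + 1) ^ 3 = (s * s + 3 * s + 3) * s + 1 := by ring
    omega
  have hq : m ∣ s * s + 3 * s + 3 := hs.dvd_of_dvd_mul_right (h1 ▸ hdvd)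
  have h2 : Nat.Coprime m (s + 2) := by
    have hd1 : Nat.gcd m (s + 2) ∣ s * s + 3 * s + 3 := (Nat.gcd_dvd_left m (s + 2)).trans hq
    have hd2 : Nat.gcd m (s + 2) ∣ (s + 2) * (s + 1) :=
      Dvd.dvd.mul_right (Nat.gcd_dvd_right m (s + 2)) _
    have hd3 : Nat.gcd m (s + 2) ∣ (s * s + 3 * s + 3) - (s + 2) * (s + 1) :=
      Nat.dvd_sub hd1 hd2
    have he : (s * s + 3 * s + 3) - (s + 2) * (s + 1) = 1 := by
      have : (s + 2) * (s + 1) = s * s + 3 * s + 2 := by ring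
      omega
    exact Nat.dvd_one.mp (he ▸ hd3)
  have h3 : (s + 1) ^ 2 - 1 = s * (s + 2) := by
    have : (s + 1) ^ 2 = s * (s + 2) + 1 := by ring
    omega
  rw [h3]
  exact Nat.Coprime.mul_right hs h2

private lemma conj_class_eq {G : Type*} [Group G] (x y w : G) (m : ℕ) (c c' d : ℤ)
    (hm : 0 < m)
    (hx : x ^ ((m : ℕ) : ℤ) = 1)
    (hyx : y * x * y⁻¹ = x ^ c)
    (hyx' : y⁻¹ * x * y = x ^ c')
    (hwx : w * x * w⁻¹ = x ^ d)
    (hyw : y * w = w * y)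
    (hgen : ∀ g : G, g ∈ Subgroup.closure ({x, y} : Set G))
    (hbez : IsCoprime ((m : ℕ) : ℤ) (d - 1)) :
    {g : G | ∃ i : ℕ, i < m ∧ g = x ^ i * w} = {g : G | IsConj w g} := by
  have hmod : ∀ a b : ℤ, ((m : ℕ) : ℤ) ∣ a - b → x ^ a = x ^ b := by
    rintro a b ⟨e, he⟩
    have h : a = b + (m : ℤ) * e := by linarith
    rw [h, zpow_add, zpow_mul, hx, one_zpow, mul_one]
  have move : ∀ (u : G) (e : ℤ), u * x * u⁻¹ = x ^ e → ∀ a : ℤ, u * x ^ a = x ^ (e * a) * u := by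
    intro u e hu a
    have h : u * x ^ a * u⁻¹ = x ^ (e * a) := by
      calc u * x ^ a * u⁻¹ = (u * x * u⁻¹) ^ a := by rw [conj_zpow]
        _ = x ^ (e * a) := by rw [hu, ← zpow_mul]
    exact mul_inv_eq_iff_eq_mul.mp h
  have hymove := move y c hyx
  have hy'move := move y⁻¹ c' (by rwa [inv_inv])
  have hwmove := move w d hwx
  have hcomm : y⁻¹ * w * y = w := by rw [mul_assoc, ← hyw, ← mul_assoc]; group
  have hZ : {g : G | ∃ i : ℕ, i < m ∧ g = x ^ i * w} = {g : G | ∃ i : ℤ, g = x ^ i * w} := by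
    ext g
    simp only [Set.mem_setOf_eq]
    constructor
    · rintro ⟨i, _, rfl⟩
      exact ⟨(i : ℤ), by rw [zpow_natCast]⟩
    · rintro ⟨i, rfl⟩
      have h1 : 0 ≤ i % (m : ℤ) := Int.emod_nonneg i (by exact_mod_cast hm.ne')
      have h2 : i % (m : ℤ) < (m : ℤ) := Int.emod_lt_of_pos i (by exact_mod_cast hm)
      refine ⟨(i % (m : ℤ)).toNat, by omega, ?_⟩
      have h3 : x ^ i = x ^ ((((i % (m : ℤ)).toNat : ℕ) : ℤ)) := by
        refine hmod _ _ ⟨i / (m : ℤ), ?_⟩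
        rw [Int.toNat_of_nonneg h1]
        have := Int.mul_ediv_add_emod i (m : ℤ)
        linarith
      rw [h3, zpow_natCast]
  rw [hZ]
  ext g
  simp only [Set.mem_setOf_eq]
  constructor
  · rintro ⟨i, rfl⟩
    obtain ⟨a, b, hab⟩ := hbez
    refine isConj_iff.mpr ⟨x ^ (-(b * i)), ?_⟩
    calc x ^ (-(b * i)) * w * (x ^ (-(b * i)))⁻¹
        = x ^ (-(b * i)) * (w * x ^ (-(-(b * i)))) := by rw [zpow_neg, zpow_neg]; group
      _ = x ^ (-(b * i)) * (x ^ (d * (-(-(b * i)))) * w) := by rw [hwmove]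
      _ = x ^ (-(b * i) + d * (-(-(b * i)))) * w := by rw [← mul_assoc, ← zpow_add]
      _ = x ^ i * w := by
          rw [hmod (-(b * i) + d * (-(-(b * i)))) i ⟨-(a * i), by linear_combination i * hab⟩]
  · intro hconj
    obtain ⟨u, hu⟩ := isConj_iff.mp hconj
    have key : (∀ i : ℤ, ∃ j : ℤ, u * (x ^ i * w) * u⁻¹ = x ^ j * w) ∧
        (∀ i : ℤ, ∃ j : ℤ, u⁻¹ * (x ^ i * w) * u = x ^ j * w) := by
      refine Subgroup.closure_induction
        (p := fun u _ => (∀ i : ℤ, ∃ j : ℤ, u * (x ^ i * w) * u⁻¹ = x ^ j * w) ∧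
          (∀ i : ℤ, ∃ j : ℤ, u⁻¹ * (x ^ i * w) * u = x ^ j * w)) ?_ ?_ ?_ ?_ (hgen u)
      · intro v hv
        simp only [Set.mem_insert_iff, Set.mem_singleton_iff] at hv
        obtain h | h := hv
        · rw [h]
          constructor
          · intro i
            refine ⟨1 + i + d * (-1), ?_⟩
            calc x * (x ^ i * w) * x⁻¹ = x ^ ((1 : ℤ) + i) * (w * x ^ (-1 : ℤ)) := by group
              _ = x ^ ((1 : ℤ) + i) * (x ^ (d * (-1)) * w) := by rw [hwmove]
              _ = x ^ (1 + i + d * (-1)) * w := by rw [← mul_assoc, ← zpow_add]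
          · intro i
            refine ⟨-1 + i + d * 1, ?_⟩
            calc x⁻¹ * (x ^ i * w) * x = x ^ ((-1 : ℤ) + i) * (w * x ^ (1 : ℤ)) := by group
              _ = x ^ ((-1 : ℤ) + i) * (x ^ (d * 1) * w) := by rw [hwmove]
              _ = x ^ (-1 + i + d * 1) * w := by rw [← mul_assoc, ← zpow_add]
        · rw [h]
          constructor
          · intro i
            refine ⟨c * i, ?_⟩
            calc y * (x ^ i * w) * y⁻¹ = (y * x ^ i) * (w * y⁻¹) := by group
              _ = (x ^ (c * i) * y) * (w * y⁻¹) := by rw [hymove]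
              _ = x ^ (c * i) * (y * w) * y⁻¹ := by group
              _ = x ^ (c * i) * (w * y) * y⁻¹ := by rw [hyw]
              _ = x ^ (c * i) * w := by group
          · intro i
            refine ⟨c' * i, ?_⟩
            calc y⁻¹ * (x ^ i * w) * y = (y⁻¹ * x ^ i) * y * (y⁻¹ * w * y) := by group
              _ = (x ^ (c' * i) * y⁻¹) * y * (y⁻¹ * w * y) := by rw [hy'move]
              _ = x ^ (c' * i) * (y⁻¹ * w * y) := by group
              _ = x ^ (c' * i) * w := by rw [hcomm]
      · exact ⟨fun i => ⟨i, by group⟩, fun i => ⟨i, by group⟩⟩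
      · rintro a b _ _ ⟨ha1, ha2⟩ ⟨hb1, hb2⟩
        constructor
        · intro i
          obtain ⟨j1, h1⟩ := hb1 i
          obtain ⟨j2, h2⟩ := ha1 j1
          refine ⟨j2, ?_⟩
          calc a * b * (x ^ i * w) * (a * b)⁻¹ = a * (b * (x ^ i * w) * b⁻¹) * a⁻¹ := by group
            _ = a * (x ^ j1 * w) * a⁻¹ := by rw [h1]
            _ = x ^ j2 * w := h2
        · intro i
          obtain ⟨j1, h1⟩ := ha2 i
          obtain ⟨j2, h2⟩ := hb2 j1
          refine ⟨j2, ?_⟩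
          calc (a * b)⁻¹ * (x ^ i * w) * (a * b) = b⁻¹ * (a⁻¹ * (x ^ i * w) * a) * b := by group
            _ = b⁻¹ * (x ^ j1 * w) * b := by rw [h1]
            _ = x ^ j2 * w := h2
      · rintro a _ ⟨ha1, ha2⟩
        exact ⟨fun i => by simpa [inv_inv] using ha2 i, fun i => by simpa [inv_inv] using ha1 i⟩
    obtain ⟨hu1, -⟩ := key
    obtain ⟨j, hj⟩ := hu1 0
    refine ⟨j, ?_⟩
    rw [← hu, ← hj, zpow_zero, one_mul]

/-- In `T_{3m}`, the set `{xⁱy : 0 ≤ i ≤ m-1}` is a single conjugacy class (the class of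
`y`), and likewise `{xⁱy⁻¹ : 0 ≤ i ≤ m-1}` is the conjugacy class of `y⁻¹`. -/
theorem T3m_coset_conjClasses (m t k : ℕ) (ht1 : 1 ≤ t) (hm : m = 3 * k + 1)
    (ht : t ^ 3 % m = 1 % m) (hgcd : Nat.gcd m (t - 1) = 1) :
    {g : T3m m t | ∃ i : ℕ, i < m ∧ g = xg m t ^ i * yg m t}
      = {g : T3m m t | IsConj (yg m t) g} ∧
    {g : T3m m t | ∃ i : ℕ, i < m ∧ g = xg m t ^ i * (yg m t)⁻¹}
      = {g : T3m m t | IsConj (yg m t)⁻¹ g} := by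
  have hm0 : 0 < m := by omega
  set X := xg m t with hX
  set Y := yg m t with hY
  -- extract the defining relations
  have hrel : ∀ r ∈ T3mRels m t, PresentedGroup.mk (T3mRels m t) r = 1 := fun r hr =>
    (QuotientGroup.eq_one_iff r).mpr (Subgroup.subset_normalClosure hr)
  have hx : X ^ m = 1 := by
    have h := hrel _ (Set.mem_insert _ _)
    rwa [map_pow] at h
  have hy3 : Y ^ 3 = 1 := by
    have h := hrel _ (Set.mem_insert_of_mem _ (Set.mem_insert _ _))
    rwa [map_pow] at h
  have hr : Y⁻¹ * X * Y = X ^ t := by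
    have h := hrel _ (Set.mem_insert_of_mem _ (Set.mem_insert_of_mem _ rfl))
    rw [map_mul, map_mul, map_mul, map_inv, map_inv, map_pow] at h
    exact mul_inv_eq_one.mp h
  -- zpow yersions
  have hxz : X ^ ((m : ℕ) : ℤ) = 1 := by rw [zpow_natCast]; exact hx
  have hc' : Y⁻¹ * X * Y = X ^ ((t : ℤ)) := by rw [zpow_natCast]; exact hr
  have h2 : Y ^ 2 = Y⁻¹ := by
    have h : Y ^ 2 * Y = 1 := by rw [← pow_succ]; exact hy3
    exact eq_inv_of_mul_eq_one_left h
  have hstep : Y⁻¹ * X ^ t * Y = X ^ (t * t) := by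
    have h := conj_pow (i := t) (a := Y⁻¹) (b := X)
    rw [inv_inv, hr] at h
    rw [← h, ← pow_mul]
  have hYXY : Y * X * Y⁻¹ = X ^ (t * t) := by
    calc Y * X * Y⁻¹ = (Y ^ 2)⁻¹ * X * Y ^ 2 := by rw [h2, inv_inv]
      _ = Y⁻¹ * (Y⁻¹ * X * Y) * Y := by rw [pow_two]; group
      _ = X ^ (t * t) := by rw [hr]; exact hstep
  have hc : Y * X * Y⁻¹ = X ^ ((t : ℤ) ^ 2) := by
    have hcast : ((t : ℤ) ^ 2) = ((t * t : ℕ) : ℤ) := by push_cast; ring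
    rw [hcast, zpow_natCast]
    exact hYXY
  have hgen : ∀ g : T3m m t, g ∈ Subgroup.closure ({X, Y} : Set (T3m m t)) := by
    intro g
    refine PresentedGroup.generated_by _ _ ?_ g
    intro j
    fin_cases j
    · exact Subgroup.subset_closure (Set.mem_insert _ _)
    · exact Subgroup.subset_closure (Set.mem_insert_of_mem _ rfl)
  have h1t2 : 1 ≤ t ^ 2 := Nat.one_le_pow 2 t (by omega)
  have hbez1 : IsCoprime ((m : ℕ) : ℤ) ((t : ℤ) ^ 2 - 1) := by
    have hcast : ((t ^ 2 - 1 : ℕ) : ℤ) = (t : ℤ) ^ 2 - 1 := by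
      push_cast [Nat.cast_sub h1t2]
      ring
    rw [← hcast]
    exact Nat.isCoprime_iff_coprime.mpr (coprime_aux m t ht1 ht hgcd)
  have hbez2 : IsCoprime ((m : ℕ) : ℤ) ((t : ℤ) - 1) := by
    have hcast : ((t - 1 : ℕ) : ℤ) = (t : ℤ) - 1 := by
      push_cast [Nat.cast_sub ht1]
      ring
    rw [← hcast]
    exact Nat.isCoprime_iff_coprime.mpr hgcd
  constructor
  · exact conj_class_eq X Y Y m ((t : ℤ) ^ 2) ((t : ℤ)) ((t : ℤ) ^ 2) hm0 hxz hc hc' hc rfl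
      hgen hbez1
  · exact conj_class_eq X Y Y⁻¹ m ((t : ℤ) ^ 2) ((t : ℤ)) ((t : ℤ)) hm0 hxz hc hc'
      (by rw [inv_inv]; exact hc') (by group) hgen hbez2
end

section
/- In T_{3m}, for any nonidentity power x^j of x, the conjugacy class of x^j is {x^j, x^{jt}, x^{jt^2}}. Consequently the conjugacy classes of T_{3m} are: {1}, k classes of size 3 contained in ⟨x⟩ \ {1}, the coset ⟨x⟩y, and the coset ⟨x⟩y^{-1}. -/
section CubeRootOfUnity

variable {R : Type*} [CommRing R] {u : R}

lemma isUnit_sq_sub_one_of_pow_three_eq_one (hu : u ^ 3 = 1) (hu1 : IsUnit (u - 1)) :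
    IsUnit (u ^ 2 - 1) := by
  have hsum : u ^ 2 + u + 1 = 0 := hu1.mul_right_eq_zero.1 (by linear_combination hu)
  have hu2 : IsUnit (u + 1) := .of_mul_eq_one (-u) (by linear_combination -hsum)
  simpa only [← sq_sub_sq, one_pow, mul_comm] using hu1.mul hu2

lemma ne_mul_and_ne_mul_sq_and_mul_ne_mul_sq (hu : u ^ 3 = 1) (hu1 : IsUnit (u - 1))
    {a : R} (ha : a ≠ 0) : a ≠ a * u ∧ a ≠ a * u ^ 2 ∧ a * u ≠ a * u ^ 2 := by
  have hu0 : IsUnit u := .of_pow_eq_one hu three_ne_zero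
  refine ⟨fun h ↦ ha ?_, fun h ↦ ha ?_, fun h ↦ ha ?_⟩
  · exact hu1.mul_left_eq_zero.1 (by linear_combination -h)
  · exact (isUnit_sq_sub_one_of_pow_three_eq_one hu hu1).mul_left_eq_zero.1
      (by linear_combination -h)
  · exact hu0.mul_left_eq_zero.1 (hu1.mul_left_eq_zero.1 (by linear_combination -h))

end CubeRootOfUnity

section OrderOf

variable {G : Type*} [Group G] (x : G)

lemma pow_eq_pow_iff_natCast_eq (a b : ℕ) : x ^ a = x ^ b ↔ (a : ZMod (orderOf x)) = b := by
  rw [pow_eq_pow_iff_modEq, ZMod.natCast_eq_natCast_iff]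

lemma pow_eq_one_iff_natCast_eq_zero (a : ℕ) : x ^ a = 1 ↔ (a : ZMod (orderOf x)) = 0 := by
  rw [ZMod.natCast_eq_zero_iff, orderOf_dvd_iff_pow_eq_one]

lemma pow_val_natCast [NeZero (orderOf x)] (a : ℕ) :
    x ^ (a : ZMod (orderOf x)).val = x ^ a := by
  rw [pow_eq_pow_iff_natCast_eq, ZMod.natCast_zmod_val]

end OrderOf

section Conjugation

variable {G : Type*} [Group G]

lemma isConj_iff_exists_inv_mul_mul {a b : G} : IsConj a b ↔ ∃ c, c⁻¹ * a * c = b :=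
  isConj_iff.trans ⟨fun ⟨c, hc⟩ ↦ ⟨c⁻¹, by rwa [inv_inv]⟩, fun ⟨c, hc⟩ ↦ ⟨c⁻¹, by rwa [inv_inv]⟩⟩

variable {x y : G} {t : ℕ}

lemma inv_pow_mul_pow_mul_pow (hxy : y⁻¹ * x * y = x ^ t) (a e : ℕ) :
    (y ^ e)⁻¹ * x ^ a * y ^ e = x ^ (a * t ^ e) := by
  induction e generalizing a with
  | zero => simp
  | succ e ih =>
    calc (y ^ (e + 1))⁻¹ * x ^ a * y ^ (e + 1) = y⁻¹ * ((y ^ e)⁻¹ * x ^ a * y ^ e) * y := by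
          group
      _ = (y⁻¹ * x * y) ^ (a * t ^ e) := by rw [ih]; simpa using (conj_pow (a := y⁻¹)).symm
      _ = x ^ (a * t ^ (e + 1)) := by rw [hxy, ← pow_mul]; ring_nf

lemma mul_pow_mul_inv_of_pow_three (hy : y ^ 3 = 1) (hxy : y⁻¹ * x * y = x ^ t) (a : ℕ) :
    y * x ^ a * y⁻¹ = x ^ (a * t ^ 2) := by
  have hy2 : y⁻¹ = y ^ 2 := inv_eq_of_mul_eq_one_right (by rw [← pow_succ', hy])
  rw [← inv_pow_mul_pow_mul_pow hxy, ← hy2, inv_inv]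

lemma exists_eq_pow_mul_pow (hgen : Subgroup.closure {x, y} = ⊤) (hx : IsOfFinOrder x)
    (hy : IsOfFinOrder y) (hxy : y⁻¹ * x * y = x ^ t) (g : G) :
    ∃ e n : ℕ, g = y ^ e * x ^ n := by
  have hg : g ∈ Submonoid.closure {x, y} := by
    rw [← Subgroup.closure_toSubmonoid_of_isOfFinOrder (by simp [hx, hy]), hgen]
    trivial
  induction hg using Submonoid.closure_induction_right with
  | one => exact ⟨0, 0, by simp⟩
  | mul_right g _ s hs ih =>
    obtain ⟨e, n, rfl⟩ := ih
    rcases hs with rfl | rfl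
    · exact ⟨e, n + 1, by rw [pow_succ, mul_assoc]⟩
    · refine ⟨e + 1, n * t, ?_⟩
      rw [← pow_one t, ← inv_pow_mul_pow_mul_pow hxy n 1]
      group

lemma ncard_triple_pow_eq_three {m : ℕ} (hx : orderOf x = m) (ht3 : (t : ZMod m) ^ 3 = 1)
    (ht1 : IsUnit ((t : ZMod m) - 1)) {j : ℕ} (hj : x ^ j ≠ 1) :
    Set.ncard {x ^ j, x ^ (j * t), x ^ (j * t ^ 2)} = 3 := by
  subst hx
  rw [ne_eq, pow_eq_one_iff_natCast_eq_zero] at hj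
  obtain ⟨h1, h2, h3⟩ := ne_mul_and_ne_mul_sq_and_mul_ne_mul_sq ht3 ht1 hj
  rw [Set.ncard_eq_three]
  refine ⟨_, _, _, ?_, ?_, ?_, rfl⟩ <;>
    simpa only [ne_eq, pow_eq_pow_iff_natCast_eq, Nat.cast_mul, Nat.cast_pow]

section NormalForm

variable (hnf : ∀ g : G, ∃ e n : ℕ, g = y ^ e * x ^ n)
include hnf

lemma setOf_isConj_pow_eq (hy : y ^ 3 = 1) (hxy : y⁻¹ * x * y = x ^ t) (j : ℕ) :
    {h | IsConj (x ^ j) h} = {x ^ j, x ^ (j * t), x ^ (j * t ^ 2)} := by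
  ext h
  simp only [Set.mem_ofPred_eq, Set.mem_insert_iff, Set.mem_singleton_iff,
    isConj_iff_exists_inv_mul_mul]
  constructor
  · rintro ⟨c, rfl⟩
    obtain ⟨e, n, rfl⟩ := hnf c
    have hconj : (y ^ e * x ^ n)⁻¹ * x ^ j * (y ^ e * x ^ n) = x ^ (j * t ^ (e % 3)) :=
      calc (y ^ e * x ^ n)⁻¹ * x ^ j * (y ^ e * x ^ n)
          = (x ^ n)⁻¹ * ((y ^ (e % 3))⁻¹ * x ^ j * y ^ (e % 3)) * x ^ n := by
            rw [← pow_eq_pow_mod e hy]; group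
        _ = x ^ (j * t ^ (e % 3)) := by
            rw [inv_pow_mul_pow_mul_pow hxy, mul_assoc, pow_mul_comm, inv_mul_cancel_left]
    rw [hconj]
    have : e % 3 < 3 := Nat.mod_lt _ three_pos
    interval_cases e % 3 <;> simp
  · rintro (rfl | rfl | rfl)
    exacts [⟨1, by group⟩, ⟨y, by simpa using inv_pow_mul_pow_mul_pow hxy j 1⟩,
      ⟨y ^ 2, inv_pow_mul_pow_mul_pow hxy j 2⟩]

lemma setOf_isConj_eq_pow_mul {z : G} {m s : ℕ} [NeZero m] (hx : orderOf x = m)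
    (hyz : Commute y z) (hzx : ∀ n : ℕ, z * x ^ n * z⁻¹ = x ^ (n * s))
    (hs : IsUnit ((s : ZMod m) - 1)) :
    {h | IsConj z h} = {g | ∃ i : ℕ, g = x ^ i * z} := by
  subst hx
  have key : ∀ n i : ℕ,
      (x ^ n)⁻¹ * z * x ^ n = x ^ i * z ↔ (n : ZMod (orderOf x)) * (s - 1) = i := by
    intro n i
    have : (x ^ n)⁻¹ * z * x ^ n = (x ^ n)⁻¹ * x ^ (n * s) * z := by rw [← hzx]; group
    rw [this, mul_left_inj, inv_mul_eq_iff_eq_mul, ← pow_add, pow_eq_pow_iff_natCast_eq]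
    push_cast
    constructor <;> intro h <;> linear_combination h
  ext h
  simp only [Set.mem_ofPred_eq, isConj_iff_exists_inv_mul_mul]
  constructor
  · rintro ⟨c, rfl⟩
    obtain ⟨e, n, rfl⟩ := hnf c
    refine ⟨((n : ZMod (orderOf x)) * (s - 1)).val, ?_⟩
    rw [← (key n _).2 (ZMod.natCast_zmod_val _).symm, mul_inv_rev, mul_assoc (x ^ n)⁻¹,
      (hyz.pow_left e).inv_left.eq]
    group
  · rintro ⟨i, rfl⟩
    refine ⟨x ^ (i * hs.unit⁻¹ : ZMod (orderOf x)).val, (key _ _).2 ?_⟩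
    rw [ZMod.natCast_zmod_val, mul_assoc, hs.val_inv_mul, mul_one]

end NormalForm

section ConjClassesOfPowers

variable (hcls : ∀ j : ℕ, {h | IsConj (x ^ j) h} = {x ^ j, x ^ (j * t), x ^ (j * t ^ 2)})

include hcls in
lemma setOf_isConj_pow_val_eq_iff [NeZero (orderOf x)] (a b : ZMod (orderOf x)) :
    {h | IsConj (x ^ b.val) h} = {h | IsConj (x ^ a.val) h} ↔
      b = a ∨ b = a * t ∨ b = a * t ^ 2 := by
  change conjugatesOf _ = conjugatesOf _ ↔ _
  rw [← isConj_iff_conjugatesOf_eq, isConj_comm]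
  change x ^ b.val ∈ {h | IsConj (x ^ a.val) h} ↔ _
  simp only [hcls, Set.mem_insert_iff, Set.mem_singleton_iff, pow_eq_pow_iff_natCast_eq,
    Nat.cast_mul, Nat.cast_pow, ZMod.natCast_zmod_val]

lemma setOf_setOf_isConj_pow_eq_image [NeZero (orderOf x)] [DecidableEq (Set G)] :
    {S : Set G | ∃ j : ℕ, x ^ j ≠ 1 ∧ S = {h | IsConj (x ^ j) h}} =
      (Finset.univ.erase 0).image fun a : ZMod (orderOf x) ↦ {h | IsConj (x ^ a.val) h} := by
  ext S
  simp only [Set.mem_ofPred_eq, Finset.coe_image, Set.mem_image, Finset.mem_coe,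
    Finset.mem_erase, Finset.mem_univ, and_true, ne_eq, pow_eq_one_iff_natCast_eq_zero]
  constructor
  · rintro ⟨j, hj, rfl⟩
    exact ⟨j, hj, by rw [pow_val_natCast]⟩
  · rintro ⟨a, ha, rfl⟩
    exact ⟨a.val, by rwa [ZMod.natCast_zmod_val], rfl⟩

include hcls in
lemma three_mul_card_setOf_setOf_isConj_pow {m : ℕ} [NeZero m] (hx : orderOf x = m)
    (ht3 : (t : ZMod m) ^ 3 = 1) (ht1 : IsUnit ((t : ZMod m) - 1)) :
    3 * Nat.card {S : Set G | ∃ j : ℕ, x ^ j ≠ 1 ∧ S = {h | IsConj (x ^ j) h}} = m - 1 := by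
  classical
  subst hx
  set f := fun a : ZMod (orderOf x) ↦ {h | IsConj (x ^ a.val) h}
  set s : Finset (ZMod (orderOf x)) := Finset.univ.erase 0
  have htu : IsUnit (t : ZMod (orderOf x)) := .of_pow_eq_one ht3 three_ne_zero
  have hfiber : ∀ b ∈ s.image f, (s.filter (f · = b)).card = 3 := by
    simp only [Finset.mem_image]
    rintro _ ⟨a, ha, rfl⟩
    have ha0 : a ≠ 0 := Finset.ne_of_mem_erase ha
    obtain ⟨h1, h2, h3⟩ := ne_mul_and_ne_mul_sq_and_mul_ne_mul_sq ht3 ht1 ha0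
    have : s.filter (f · = f a) = {a, a * t, a * t ^ 2} := by
      ext b
      simp only [Finset.mem_filter, f, setOf_isConj_pow_val_eq_iff hcls, Finset.mem_insert,
        Finset.mem_singleton, s, Finset.mem_erase, Finset.mem_univ, and_true]
      refine ⟨And.right, fun hb ↦ ⟨?_, hb⟩⟩
      rcases hb with rfl | rfl | rfl
      exacts [ha0, htu.mul_left_eq_zero.not.2 ha0, (htu.pow 2).mul_left_eq_zero.not.2 ha0]
    rw [this, Finset.card_insert_of_notMem (by simp [h1, h2]), Finset.card_pair h3]
  have hs : s.card = 3 * (s.image f).card :=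
    le_antisymm (Finset.card_le_mul_card_image s 3 fun b hb ↦ (hfiber b hb).le)
      (Finset.mul_card_image_le_card s 3 fun b hb ↦ (hfiber b hb).ge)
  rw [setOf_setOf_isConj_pow_eq_image, Nat.card_coe_set_eq, Set.ncard_coe_finset, ← hs,
    Finset.card_erase_of_mem (Finset.mem_univ _), Finset.card_univ, ZMod.card]

end ConjClassesOfPowers

end Conjugation


namespace T3m

variable {m t : ℕ}

lemma xg_pow : xg m t ^ m = 1 := by
  simpa [xg, PresentedGroup.of] using
    PresentedGroup.one_of_mem (rels := T3mRels m t) (Set.mem_insert _ _)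

lemma yg_pow_three : yg m t ^ 3 = 1 := by
  simpa [yg, PresentedGroup.of] using PresentedGroup.one_of_mem (rels := T3mRels m t)
    (Set.mem_insert_of_mem _ (Set.mem_insert _ _))

lemma yg_inv_mul_xg_mul_yg : (yg m t)⁻¹ * xg m t * yg m t = xg m t ^ t := by
  simpa [xg, yg, PresentedGroup.of, mul_inv_eq_one] using
    PresentedGroup.one_of_mem (rels := T3mRels m t)
      (Set.mem_insert_of_mem _ (Set.mem_insert_of_mem _ rfl))

lemma closure_xg_yg : Subgroup.closure {xg m t, yg m t} = ⊤ := by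
  rw [← PresentedGroup.closure_range_of]
  congr
  ext
  simp [Fin.exists_fin_two, xg, yg, eq_comm]

def lift {G : Type*} [Group G] {a b : G} (ha : a ^ m = 1) (hb : b ^ 3 = 1)
    (hab : b⁻¹ * a * b = a ^ t) : T3m m t →* G :=
  PresentedGroup.toGroup (f := ![a, b]) (by rintro r (rfl | rfl | rfl) <;> simp [ha, hb, hab])

lemma lift_xg {G : Type*} [Group G] {a b : G} (ha : a ^ m = 1) (hb : b ^ 3 = 1)
    (hab : b⁻¹ * a * b = a ^ t) : lift ha hb hab (xg m t) = a :=
  PresentedGroup.toGroup.of _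

lemma orderOf_xg (ht : (t : ZMod m) ^ 3 = 1) : orderOf (xg m t) = m := by
  refine Nat.dvd_antisymm (orderOf_dvd_of_pow_eq_one xg_pow) ?_
  let u : (ZMod m)ˣ := (IsUnit.of_pow_eq_one ht three_ne_zero).unit
  have hu : (u : ZMod m) = t := rfl
  have ha : Equiv.addRight (1 : ZMod m) ^ m = 1 := by ext; simp
  have hb : MulAction.toPerm u⁻¹ ^ 3 = (1 : Equiv.Perm (ZMod m)) := by
    have hu3 : u ^ 3 = 1 := Units.ext (by simpa [hu] using ht)
    ext c; simp [Equiv.Perm.coe_pow, smul_smul, ← pow_three, inv_pow, hu3]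
  have hab : (MulAction.toPerm u⁻¹)⁻¹ * Equiv.addRight (1 : ZMod m) * MulAction.toPerm u⁻¹ =
      Equiv.addRight 1 ^ t := by
    ext c; simp [Units.smul_def, ← hu]
  have h := congrArg (· 0) (map_pow (lift ha hb hab) (xg m t) (orderOf (xg m t)))
  rw [pow_orderOf_eq_one, map_one, lift_xg] at h
  simpa [ZMod.natCast_eq_zero_iff, eq_comm] using h

lemma exists_eq_yg_pow_mul_xg_pow [NeZero m] (g : T3m m t) :
    ∃ e n : ℕ, g = yg m t ^ e * xg m t ^ n :=
  exists_eq_pow_mul_pow closure_xg_yg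
    (isOfFinOrder_iff_pow_eq_one.2 ⟨m, NeZero.pos m, xg_pow⟩)
    (isOfFinOrder_iff_pow_eq_one.2 ⟨3, three_pos, yg_pow_three⟩) yg_inv_mul_xg_mul_yg g

end T3m

open T3m

theorem T3m_conjClasses_general (m t k : ℕ) (ht1 : 1 ≤ t) (hm : m = 3 * k + 1)
    (ht : t ^ 3 % m = 1 % m) (hgcd : Nat.gcd m (t - 1) = 1) :
    (∀ j : ℕ, xg m t ^ j ≠ 1 →
      {h : T3m m t | IsConj (xg m t ^ j) h}
        = {xg m t ^ j, xg m t ^ (j * t), xg m t ^ (j * t ^ 2)}) ∧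
    {h : T3m m t | IsConj (yg m t) h}
      = {g : T3m m t | ∃ i : ℕ, g = xg m t ^ i * yg m t} ∧
    {h : T3m m t | IsConj (yg m t)⁻¹ h}
      = {g : T3m m t | ∃ i : ℕ, g = xg m t ^ i * (yg m t)⁻¹} ∧
    (∀ j : ℕ, xg m t ^ j ≠ 1 →
      Nat.card ({xg m t ^ j, xg m t ^ (j * t), xg m t ^ (j * t ^ 2)} : Set (T3m m t)) = 3 ∧
      ({xg m t ^ j, xg m t ^ (j * t), xg m t ^ (j * t ^ 2)} : Set (T3m m t))
        ⊆ (Subgroup.zpowers (xg m t) : Set (T3m m t)) \ {1}) ∧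
    Nat.card {S : Set (T3m m t) | ∃ j : ℕ, xg m t ^ j ≠ 1 ∧
      S = {h : T3m m t | IsConj (xg m t ^ j) h}} = k := by
  have : NeZero m := ⟨by omega⟩
  have ht3 : (t : ZMod m) ^ 3 = 1 := by exact_mod_cast (ZMod.natCast_eq_natCast_iff' _ _ _).2 ht
  have ht1' : IsUnit ((t : ZMod m) - 1) := by
    simpa [Nat.cast_sub ht1] using
      (ZMod.isUnit_iff_coprime (t - 1) m).2 (Nat.coprime_comm.1 hgcd)
  have hx := orderOf_xg ht3
  have hnf := exists_eq_yg_pow_mul_xg_pow (m := m) (t := t)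
  have hcls := setOf_isConj_pow_eq hnf yg_pow_three yg_inv_mul_xg_mul_yg
  refine ⟨fun j _ ↦ hcls j, ?_, ?_, fun j hj ↦ ⟨?_, ?_⟩, ?_⟩
  · refine setOf_isConj_eq_pow_mul hnf hx (Commute.refl _)
      (mul_pow_mul_inv_of_pow_three yg_pow_three yg_inv_mul_xg_mul_yg) ?_
    simpa using isUnit_sq_sub_one_of_pow_three_eq_one ht3 ht1'
  · refine setOf_isConj_eq_pow_mul hnf hx (Commute.refl _).inv_right (fun n ↦ ?_) ht1'
    simpa using inv_pow_mul_pow_mul_pow yg_inv_mul_xg_mul_yg n 1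
  · rw [Nat.card_coe_set_eq, ncard_triple_pow_eq_three hx ht3 ht1' hj]
  · intro h hh
    refine ⟨?_, fun h1 ↦ hj ?_⟩
    · rcases hh with rfl | rfl | rfl <;> exact Subgroup.npow_mem_zpowers _ _
    · rw [← hcls j, Set.mem_singleton_iff.1 h1] at hh
      exact isConj_one_left.1 hh
  · have := three_mul_card_setOf_setOf_isConj_pow hcls hx ht3 ht1'
    omega

/-- In `T_{3m}` (with `t ≢ 1 (mod m)`), the conjugacy class of any nonidentity power `xʲ`
is `{xʲ, x^{jt}, x^{jt²}}`; consequently the conjugacy classes are `{1}`, `k` classes of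
size 3 inside `⟨x⟩ \ {1}`, the coset `⟨x⟩y`, and the coset `⟨x⟩y⁻¹`. -/
theorem T3m_conjClasses (m t k : ℕ) (ht1 : 1 ≤ t) (hm : m = 3 * k + 1)
    (ht : t ^ 3 % m = 1 % m) (hgcd : Nat.gcd m (t - 1) = 1) (htne : t % m ≠ 1 % m) :
    (∀ j : ℕ, xg m t ^ j ≠ 1 →
      {h : T3m m t | IsConj (xg m t ^ j) h}
        = {xg m t ^ j, xg m t ^ (j * t), xg m t ^ (j * t ^ 2)}) ∧
    {h : T3m m t | IsConj (yg m t) h}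
      = {g : T3m m t | ∃ i : ℕ, g = xg m t ^ i * yg m t} ∧
    {h : T3m m t | IsConj (yg m t)⁻¹ h}
      = {g : T3m m t | ∃ i : ℕ, g = xg m t ^ i * (yg m t)⁻¹} ∧
    (∀ j : ℕ, xg m t ^ j ≠ 1 →
      Nat.card ({xg m t ^ j, xg m t ^ (j * t), xg m t ^ (j * t ^ 2)} : Set (T3m m t)) = 3 ∧
      ({xg m t ^ j, xg m t ^ (j * t), xg m t ^ (j * t ^ 2)} : Set (T3m m t))
        ⊆ (Subgroup.zpowers (xg m t) : Set (T3m m t)) \ {1}) ∧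
    Nat.card {S : Set (T3m m t) | ∃ j : ℕ, xg m t ^ j ≠ 1 ∧
      S = {h : T3m m t | IsConj (xg m t ^ j) h}} = k :=
  T3m_conjClasses_general m t k ht1 hm ht hgcd
end

section
/- In T_{3m}, the set of elements whose order is a power of 3 (including the identity) equals {1} ∪ ⟨x⟩y ∪ ⟨x⟩y^{-1}; every element x^i y^{±1} has order 3 and every nonidentity element x^i has order coprime to 3. -/
/-!
Conjugation by `y` multiplies exponents of `x` by `t`, and `t³ ≡ 1`, `gcd (m, t - 1) = 1` give
`m ∣ t² + t + 1`. So `⟨x⟩` is normal, every element is `xⁱ yʲ` with `yʲ ∈ {1, y, y⁻¹}`, and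
`(xⁱ y)³ = y³ · x^(i t (t² + t + 1)) = 1`. The map `T_{3m} → ℤ/3`, `x ↦ 0`, `y ↦ 1` shows
`xⁱ y ≠ 1`, so `xⁱ y` has order exactly `3`, and so has `xⁱ y⁻¹`, the inverse of a conjugate
of `x⁻ⁱ y`. Every `xⁱ` has order dividing `m`, which is prime to `3`.
-/

open Subgroup

theorem Nat.dvd_sq_add_add_one_of_pow_three_modEq {m t : ℕ} (ht : t ^ 3 ≡ 1 [MOD m])
    (hcop : Nat.Coprime m (t - 1)) : m ∣ t ^ 2 + t + 1 := by
  obtain rfl | ⟨s, rfl⟩ : t = 0 ∨ ∃ s, t = s + 1 := by cases t <;> simp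
  · simp_all
  · have hfac : (s + 1) ^ 3 - 1 = s * ((s + 1) ^ 2 + (s + 1) + 1) :=
      Nat.sub_eq_of_eq_add (by ring)
    have hdvd : m ∣ (s + 1) ^ 3 - 1 :=
      (Nat.modEq_iff_dvd' (Nat.one_le_pow _ _ s.succ_pos)).mp ht.symm
    rw [hfac] at hdvd
    exact hcop.dvd_of_dvd_mul_left hdvd

section Group

variable {G : Type*} [Group G] {x y : G}

theorem conj_mem_zpowers_of_conj_mem {g h : G} (hg : g * x * g⁻¹ ∈ zpowers x)
    (hh : h ∈ zpowers x) : g * h * g⁻¹ ∈ zpowers x := by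
  obtain ⟨a, rfl⟩ := mem_zpowers_iff.mp hh
  rw [← conj_zpow]
  exact zpow_mem hg a

theorem normal_zpowers_of_closure_pair_eq_top (hgen : closure {x, y} = ⊤)
    (hconj : y * x * y⁻¹ ∈ zpowers x) (hconj' : y⁻¹ * x * y ∈ zpowers x) :
    (zpowers x).Normal := by
  rw [← normalizer_eq_top_iff, eq_top_iff, ← hgen, closure_le]
  rintro g (rfl | rfl)
  · exact le_normalizer (mem_zpowers g)
  · refine mem_normalizer_iff.mpr fun h ↦ ⟨conj_mem_zpowers_of_conj_mem hconj, fun hh ↦ ?_⟩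
    simpa [mul_assoc] using
      conj_mem_zpowers_of_conj_mem (g := g⁻¹) (by simpa using hconj') hh

theorem exists_eq_zpow_mul_zpow (hgen : closure {x, y} = ⊤)
    (hconj : y * x * y⁻¹ ∈ zpowers x) (hconj' : y⁻¹ * x * y ∈ zpowers x) (g : G) :
    ∃ i j : ℤ, g = x ^ i * y ^ j := by
  have := normal_zpowers_of_closure_pair_eq_top hgen hconj hconj'
  have hg : g ∈ zpowers x ⊔ zpowers y := by
    rw [zpowers_eq_closure, zpowers_eq_closure, ← Subgroup.closure_union, Set.singleton_union, hgen]
    exact mem_top g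
  obtain ⟨_, ⟨i, rfl⟩, _, ⟨j, rfl⟩, rfl⟩ := mem_sup_of_normal_left.mp hg
  exact ⟨i, j, rfl⟩

theorem sq_eq_inv_of_pow_three_eq_one (hy : y ^ 3 = 1) : y ^ 2 = y⁻¹ :=
  eq_inv_of_mul_eq_one_left (by rw [← pow_succ, hy])

theorem zpow_eq_one_or_self_or_inv (hy : y ^ 3 = 1) (j : ℤ) :
    y ^ j = 1 ∨ y ^ j = y ∨ y ^ j = y⁻¹ := by
  rw [zpow_eq_zpow_emod' j hy]
  obtain h | h | h : j % 3 = 0 ∨ j % 3 = 1 ∨ j % 3 = 2 := by omega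
  all_goals simp only [Nat.cast_ofNat, h, zpow_ofNat, pow_zero, pow_one,
    sq_eq_inv_of_pow_three_eq_one hy, true_or, or_true]

theorem inv_pow_mul_zpow_mul_pow {t : ℕ} (hxy : y⁻¹ * x * y = x ^ t) (k : ℕ) (a : ℤ) :
    (y ^ k)⁻¹ * x ^ a * y ^ k = x ^ ((t : ℤ) ^ k * a) := by
  induction k with
  | zero => simp
  | succ k ih =>
    calc (y ^ (k + 1))⁻¹ * x ^ a * y ^ (k + 1) = y⁻¹ * ((y ^ k)⁻¹ * x ^ a * y ^ k) * y⁻¹⁻¹ := by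
          group
      _ = (y⁻¹ * x * y⁻¹⁻¹) ^ ((t : ℤ) ^ k * a) := by rw [ih, conj_zpow]
      _ = x ^ ((t : ℤ) ^ (k + 1) * a) := by
          rw [inv_inv, hxy, ← zpow_natCast, ← zpow_mul]; ring_nf

theorem mul_mul_inv_mem_zpowers_of_pow_three {t : ℕ} (hy : y ^ 3 = 1)
    (hxy : y⁻¹ * x * y = x ^ t) : y * x * y⁻¹ ∈ zpowers x := by
  have hconj := inv_pow_mul_zpow_mul_pow hxy 2 1
  rw [sq_eq_inv_of_pow_three_eq_one hy, inv_inv, zpow_one] at hconj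
  exact hconj ▸ zpow_mem_zpowers x _

theorem zpow_mul_pow_three_eq_one {m t : ℕ} (hx : x ^ m = 1) (hy : y ^ 3 = 1)
    (hxy : y⁻¹ * x * y = x ^ t) (hmt : m ∣ t ^ 2 + t + 1) (a : ℤ) : (x ^ a * y) ^ 3 = 1 := by
  have hexp : (x ^ a * y) ^ 3 = y ^ 3 * ((y ^ 3)⁻¹ * x ^ a * y ^ 3) *
      ((y ^ 2)⁻¹ * x ^ a * y ^ 2) * ((y ^ 1)⁻¹ * x ^ a * y ^ 1) := by
    simp only [pow_succ, pow_zero, one_mul]; group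
  rw [hexp, inv_pow_mul_zpow_mul_pow hxy, inv_pow_mul_zpow_mul_pow hxy,
    inv_pow_mul_zpow_mul_pow hxy, hy, one_mul, ← zpow_add, ← zpow_add,
    ← orderOf_dvd_iff_zpow_eq_one]
  have hsum : (t : ℤ) ^ 3 * a + (t : ℤ) ^ 2 * a + (t : ℤ) ^ 1 * a =
      (t ^ 2 + t + 1 : ℕ) * (t * a) := by push_cast; ring
  rw [hsum]
  exact (Int.natCast_dvd_natCast.mpr ((orderOf_dvd_of_pow_eq_one hx).trans hmt)).mul_right _

theorem orderOf_zpow_mul_eq_three {m t : ℕ} (hx : x ^ m = 1) (hy : y ^ 3 = 1)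
    (hxy : y⁻¹ * x * y = x ^ t) (hmt : m ∣ t ^ 2 + t + 1) (hyx : y ∉ zpowers x) (a : ℤ) :
    orderOf (x ^ a * y) = 3 :=
  orderOf_eq_prime (zpow_mul_pow_three_eq_one hx hy hxy hmt a) fun h ↦
    hyx (eq_inv_of_mul_eq_one_right h ▸ inv_mem (zpow_mem_zpowers x a))

theorem orderOf_zpow_mul_inv_eq_three {m t : ℕ} (hx : x ^ m = 1) (hy : y ^ 3 = 1)
    (hxy : y⁻¹ * x * y = x ^ t) (hmt : m ∣ t ^ 2 + t + 1) (hyx : y ∉ zpowers x) (a : ℤ) :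
    orderOf (x ^ a * y⁻¹) = 3 := by
  have hsemiconj : SemiconjBy y (x ^ (-a) * y) (y * x ^ (-a)) := by simp [SemiconjBy, mul_assoc]
  rw [← orderOf_inv, mul_inv_rev, inv_inv, ← zpow_neg, ← hsemiconj.orderOf_eq]
  exact orderOf_zpow_mul_eq_three hx hy hxy hmt hyx (-a)

theorem coprime_orderOf_three_of_mem_zpowers {m : ℕ} (hx : x ^ m = 1) (hm : ¬ 3 ∣ m) {g : G}
    (hg : g ∈ zpowers x) : Nat.Coprime (orderOf g) 3 :=
  Nat.Coprime.coprime_dvd_left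
    ((orderOf_dvd_of_mem_zpowers hg).trans (orderOf_dvd_of_pow_eq_one hx))
    (Nat.prime_three.coprime_iff_not_dvd.mpr hm).symm

theorem exists_orderOf_eq_three_pow_iff (hnf : ∀ g : G, ∃ i j : ℤ, g = x ^ i * y ^ j)
    (hy : y ^ 3 = 1) (hcop : ∀ i : ℤ, Nat.Coprime (orderOf (x ^ i)) 3)
    (hord : ∀ i : ℤ, orderOf (x ^ i * y) = 3 ∧ orderOf (x ^ i * y⁻¹) = 3) (g : G) :
    (∃ n : ℕ, orderOf g = 3 ^ n) ↔
      (g = 1 ∨ ∃ i : ℤ, g = x ^ i * y) ∨ ∃ i : ℤ, g = x ^ i * y⁻¹ := by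
  constructor
  · rintro ⟨n, hn⟩
    obtain ⟨i, j, rfl⟩ := hnf g
    rcases zpow_eq_one_or_self_or_inv hy j with h | h | h <;> rw [h] at hn ⊢
    · rw [mul_one] at hn ⊢
      have hcop3 := hn ▸ hcop i
      cases n with
      | zero => exact .inl (.inl (orderOf_eq_one_iff.mp hn))
      | succ n => simp [Nat.coprime_pow_left_iff] at hcop3
    · exact .inl (.inr ⟨i, rfl⟩)
    · exact .inr ⟨i, rfl⟩
  · rintro ((rfl | ⟨i, rfl⟩) | ⟨i, rfl⟩)
    · exact ⟨0, orderOf_one⟩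
    · exact ⟨1, (hord i).1⟩
    · exact ⟨1, (hord i).2⟩

end Group

section T3m

variable {m t : ℕ}

theorem xg_pow_eq_one : xg m t ^ m = 1 := by
  simpa [xg, PresentedGroup.of] using
    PresentedGroup.one_of_mem (rels := T3mRels m t) (Set.mem_insert _ _)

theorem yg_pow_three_eq_one : yg m t ^ 3 = 1 := by
  simpa [yg, PresentedGroup.of] using
    PresentedGroup.one_of_mem (rels := T3mRels m t) (.inr (.inl rfl))

theorem inv_yg_mul_xg_mul_yg : (yg m t)⁻¹ * xg m t * yg m t = xg m t ^ t := by
  refine mul_inv_eq_one.mp ?_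
  simpa [xg, yg, PresentedGroup.of] using
    PresentedGroup.one_of_mem (rels := T3mRels m t) (.inr (.inr rfl))

theorem closure_xg_yg : closure {xg m t, yg m t} = ⊤ := by
  rw [← PresentedGroup.closure_range_of]
  congr 1
  ext g
  simp [Fin.exists_fin_two, xg, yg, eq_comm]

def T3m.toZMod3 (m t : ℕ) : T3m m t →* Multiplicative (ZMod 3) :=
  PresentedGroup.toGroup (f := ![1, .ofAdd 1]) <| by
    rintro r (rfl | rfl | rfl)
    · simp
    · rw [map_pow, FreeGroup.lift_apply_of]
      decide
    · simp

theorem yg_notMem_zpowers_xg : yg m t ∉ zpowers (xg m t) := by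
  rintro ⟨a, ha⟩
  have h : (1 : Multiplicative (ZMod 3)) = .ofAdd 1 := by
    simpa [T3m.toZMod3, xg, yg, PresentedGroup.toGroup.of] using congrArg (T3m.toZMod3 m t) ha
  exact absurd h (by decide)

end T3m

theorem T3m_three_elements_general (m t k : ℕ) (hm : m = 3 * k + 1)
    (ht : t ^ 3 % m = 1 % m) (hgcd : Nat.gcd m (t - 1) = 1) :
    ({g : T3m m t | ∃ n : ℕ, orderOf g = 3 ^ n}
      = {1} ∪ {g : T3m m t | ∃ i : ℤ, g = xg m t ^ i * yg m t}
          ∪ {g : T3m m t | ∃ i : ℤ, g = xg m t ^ i * (yg m t)⁻¹}) ∧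
    (∀ i : ℤ, orderOf (xg m t ^ i * yg m t) = 3 ∧ orderOf (xg m t ^ i * (yg m t)⁻¹) = 3) ∧
    (∀ i : ℤ, xg m t ^ i ≠ 1 → Nat.Coprime (orderOf (xg m t ^ i)) 3) := by
  have hmt : m ∣ t ^ 2 + t + 1 := Nat.dvd_sq_add_add_one_of_pow_three_modEq ht hgcd
  have hord (i : ℤ) :
      orderOf (xg m t ^ i * yg m t) = 3 ∧ orderOf (xg m t ^ i * (yg m t)⁻¹) = 3 :=
    ⟨orderOf_zpow_mul_eq_three xg_pow_eq_one yg_pow_three_eq_one inv_yg_mul_xg_mul_yg hmt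
        yg_notMem_zpowers_xg i,
      orderOf_zpow_mul_inv_eq_three xg_pow_eq_one yg_pow_three_eq_one inv_yg_mul_xg_mul_yg hmt
        yg_notMem_zpowers_xg i⟩
  have hcop (i : ℤ) : Nat.Coprime (orderOf (xg m t ^ i)) 3 :=
    coprime_orderOf_three_of_mem_zpowers xg_pow_eq_one (by omega) (zpow_mem_zpowers _ i)
  have hnf : ∀ g : T3m m t, ∃ i j : ℤ, g = xg m t ^ i * yg m t ^ j :=
    exists_eq_zpow_mul_zpow closure_xg_yg
      (mul_mul_inv_mem_zpowers_of_pow_three yg_pow_three_eq_one inv_yg_mul_xg_mul_yg)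
      (inv_yg_mul_xg_mul_yg ▸ pow_mem (mem_zpowers _) t)
  exact ⟨Set.ext (exists_orderOf_eq_three_pow_iff hnf yg_pow_three_eq_one hcop hord), hord,
    fun i _ ↦ hcop i⟩

/-- In `T_{3m}`, the set of elements of 3-power order (including `1`) is
`{1} ∪ ⟨x⟩y ∪ ⟨x⟩y⁻¹`; each `xⁱy^{±1}` has order 3 and each nonidentity `xⁱ` has order
coprime to 3. -/
theorem T3m_three_elements (m t k : ℕ) (ht1 : 1 ≤ t) (hm : m = 3 * k + 1)
    (ht : t ^ 3 % m = 1 % m) (hgcd : Nat.gcd m (t - 1) = 1) :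
    ({g : T3m m t | ∃ n : ℕ, orderOf g = 3 ^ n}
      = {1} ∪ {g : T3m m t | ∃ i : ℤ, g = xg m t ^ i * yg m t}
          ∪ {g : T3m m t | ∃ i : ℤ, g = xg m t ^ i * (yg m t)⁻¹}) ∧
    (∀ i : ℤ, orderOf (xg m t ^ i * yg m t) = 3 ∧ orderOf (xg m t ^ i * (yg m t)⁻¹) = 3) ∧
    (∀ i : ℤ, xg m t ^ i ≠ 1 → Nat.Coprime (orderOf (xg m t ^ i)) 3) :=
  T3m_three_elements_general m t k hm ht hgcd
end

section
/- Let F be a finite field of characteristic p, G a finite group, and s ∈ FG the sum of all p-elements of G (including the identity). Then the Jacobson radical J(FG) is contained in the two-sided annihilator Ann_{FG}(s) = {α ∈ FG : αs = sα = 0}. -/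
/-!
Expand `(∑ᵢ aᵢ) ^ p` into the products of all words of length `p`. A trace `τ`
(`τ (x * y) = τ (y * x)`) takes the same value on the products of a word and of its cyclic
rotations, and rotation permutes the words with order `p`, so in characteristic `p` only the
constant words survive: `τ ((∑ᵢ aᵢ) ^ p) = ∑ᵢ τ (aᵢ ^ p)`.

On `F[G]`, summing the coefficients over a conjugation-invariant set is such a trace, and iterating
gives `(β ^ p ^ N).coeff 1 = (∑_{g ^ p ^ N = 1} β.coeff g) ^ p ^ N`. An element `α` of the Jacobson
radical of the finite ring `F[G]` is nilpotent, so for large `N` the sum of the coefficients of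
`α` over the `p`-elements vanishes. The same holds for every `of x * α`, and these sums are the
coefficients of `α * s` and, by the trace property, of `s * α`.
-/

open scoped Classical

open Finset Equiv

theorem Fintype.sum_pow_noncomm {ι A : Type*} [Fintype ι] [Semiring A] (a : ι → A) (n : ℕ) :
    (∑ i, a i) ^ n = ∑ w : Fin n → ι, (List.ofFn fun k => a (w k)).prod := by
  induction n with
  | zero => simp
  | succ n ih =>
    rw [pow_succ', ih, sum_mul_sum, ← (Fin.consEquiv fun _ => ι).sum_comp, Fintype.sum_prod_type]
    simp [List.ofFn_succ]

theorem Equiv.Perm.sum_eq_sum_fixed_of_charP {α R : Type*} [Fintype α] [DecidableEq α] [Ring R]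
    {p n : ℕ} [Fact p.Prime] [CharP R p] {σ : Perm α} (hσ : σ ^ p ^ n = 1) (f : α → R)
    (hf : ∀ x, f (σ x) = f x) : ∑ x, f x = ∑ x with σ x = x, f x := by
  have hmaps (s : Finset α) : ∀ x ∈ s, f x ∈ univ.image f :=
    fun x _ => mem_image_of_mem f (mem_univ x)
  rw [← sum_fiberwise_of_maps_to (hmaps _), ← sum_fiberwise_of_maps_to (hmaps _)]
  refine sum_congr rfl fun b _ => ?_
  rw [sum_congr rfl fun x hx => (mem_filter.1 hx).2, sum_congr rfl fun x hx => (mem_filter.1 hx).2,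
    sum_const, sum_const, nsmul_eq_mul, nsmul_eq_mul, (CharP.natCast_eq_natCast R p).2]
  -- `σ` restricts to the fibre `f ⁻¹' {b}`, where it fixes as many points as there are, mod `p`
  let τ : Perm {x // f x = b} := σ.subtypePerm fun x => by rw [hf]
  have hτ : τ ^ p ^ n = 1 := by ext; simp [τ, hσ]
  have hfix : τ.supportᶜ = ({x | σ x = x} : Finset α).subtype (f · = b) := by
    ext; simp [τ, Subtype.ext_iff]
  simpa [hfix, card_subtype, Fintype.card_subtype] using (Perm.card_compl_support_modEq hτ).symm

theorem finRotate_pow_self {n : ℕ} (hn : 2 ≤ n) : finRotate n ^ n = 1 := by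
  have := pow_orderOf_eq_one (finRotate n)
  rwa [(isCycle_finRotate_of_le hn).orderOf, support_finRotate_of_le hn, card_univ,
    Fintype.card_fin] at this

def rotateWord (ι : Type*) (n : ℕ) : Perm (Fin n → ι) :=
  (finRotate n).symm.arrowCongr (Equiv.refl ι)

section RotateWord

variable {ι : Type*}

theorem rotateWord_apply {n : ℕ} (w : Fin n → ι) : rotateWord ι n w = w ∘ finRotate n := rfl

theorem rotateWord_pow_apply {n : ℕ} (k : ℕ) (w : Fin n → ι) :
    (rotateWord ι n ^ k) w = w ∘ ⇑(finRotate n ^ k) := by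
  induction k with
  | zero => rfl
  | succ k ih => rw [pow_succ', Perm.mul_apply, rotateWord_apply, ih, pow_succ, Perm.coe_mul]; rfl

theorem rotateWord_pow_self {n : ℕ} (hn : 2 ≤ n) : rotateWord ι n ^ n = 1 := by
  ext w : 1
  rw [rotateWord_pow_apply, finRotate_pow_self hn]
  rfl

theorem eq_const_of_rotateWord_eq {n : ℕ} {w : Fin (n + 1) → ι}
    (h : rotateWord ι (n + 1) w = w) : w = fun _ => w 0 := by
  funext i
  induction i using Fin.induction with
  | zero => rfl
  | succ i ih =>
    have := congrFun h i.castSucc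
    rw [rotateWord_apply, Function.comp_apply, finRotate_apply, Fin.coeSucc_eq_succ] at this
    rw [this, ih]

theorem filter_rotateWord_apply_eq_self [Fintype ι] [DecidableEq ι] {n : ℕ} :
    ({w | rotateWord ι (n + 1) w = w} : Finset _) =
      univ.map ⟨Function.const _, Function.const_injective⟩ := by
  ext w
  simp only [mem_filter, mem_univ, true_and, mem_map]
  exact ⟨fun h => ⟨w 0, (eq_const_of_rotateWord_eq h).symm⟩, by rintro ⟨i, rfl⟩; rfl⟩

end RotateWord

theorem map_prod_ofFn_comp_finRotate {A R F : Type*} [Monoid A] [FunLike F A R] (τ : F)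
    (hτ : ∀ x y, τ (x * y) = τ (y * x)) {n : ℕ} (g : Fin (n + 1) → A) :
    τ (List.ofFn (g ∘ finRotate (n + 1))).prod = τ (List.ofFn g).prod := by
  rw [List.ofFn_succ', List.ofFn_succ, List.prod_concat, List.prod_cons, hτ]
  simp [finRotate_apply, Fin.coeSucc_eq_succ]

theorem map_sum_pow_char_of_map_mul_comm {A R F ι : Type*} [Semiring A] [Ring R] (p : ℕ)
    [hp : Fact p.Prime] [CharP R p] [Fintype ι] [FunLike F A R] [AddMonoidHomClass F A R] (τ : F)
    (hτ : ∀ x y, τ (x * y) = τ (y * x)) (a : ι → A) :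
    τ ((∑ i, a i) ^ p) = ∑ i, τ (a i ^ p) := by
  classical
  obtain ⟨n, rfl⟩ := Nat.exists_eq_succ_of_ne_zero hp.out.ne_zero
  have hσ : rotateWord ι (n + 1) ^ (n + 1) ^ 1 = 1 := by
    rw [pow_one]; exact rotateWord_pow_self hp.out.two_le
  rw [Fintype.sum_pow_noncomm, map_sum, Perm.sum_eq_sum_fixed_of_charP hσ _
    fun w => map_prod_ofFn_comp_finRotate τ hτ fun k => a (w k),
    filter_rotateWord_apply_eq_self, sum_map]
  simp only [Function.Embedding.coeFn_mk, Function.const_apply, List.ofFn_const,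
    List.prod_replicate]

theorem isNilpotent_of_mem_jacobson_bot {R : Type*} [Ring R] [Finite R] {x : R}
    (hx : x ∈ (⊥ : Ideal R).jacobson) : IsNilpotent x := by
  obtain ⟨n, hn⟩ := IsArtinianRing.isNilpotent_jacobson_bot (R := R)
  exact ⟨n, by simpa [hn] using Ideal.pow_mem_pow hx n⟩

theorem IsNilpotent.eventually_pow_pow_eq_zero {M₀ : Type*} [MonoidWithZero M₀] {x : M₀}
    (hx : IsNilpotent x) {p : ℕ} (hp : 1 < p) : ∀ᶠ N in Filter.atTop, x ^ p ^ N = 0 := by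
  obtain ⟨i, hi⟩ := hx
  filter_upwards [Filter.eventually_ge_atTop i] with N hN
  exact pow_eq_zero_of_le (hN.trans (Nat.lt_pow_self hp).le) hi

theorem eventually_forall_pow_prime_pow_eq_one_iff {G : Type*} [Monoid G] [Finite G] (p : ℕ)
    [Fact p.Prime] : ∀ᶠ N in Filter.atTop, ∀ g : G, g ^ p ^ N = 1 ↔ ∃ m, orderOf g = p ^ m := by
  refine Filter.eventually_all.2 fun g => ?_
  simp_rw [exists_orderOf_eq_prime_pow_iff]
  by_cases h : ∃ m, g ^ p ^ m = 1
  · obtain ⟨m, hm⟩ := h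
    filter_upwards [Filter.eventually_ge_atTop m] with N hN
    obtain ⟨c, hc⟩ := pow_dvd_pow p hN
    exact iff_of_true (by rw [hc, pow_mul, hm, one_pow]) ⟨m, hm⟩
  · exact .of_forall fun N => iff_of_false (fun hN => h ⟨N, hN⟩) h

namespace MonoidAlgebra

variable {k G : Type*}

instance finite [Semiring k] [Finite k] [Finite G] : Finite (MonoidAlgebra k G) :=
  Finite.of_injective (fun x : MonoidAlgebra k G => ⇑x.coeff)
    (DFunLike.coe_injective.comp coeff_injective)

section Semiring

variable [Semiring k]

noncomputable def coeffSum (S : Finset G) : MonoidAlgebra k G →ₗ[k] k :=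
  ∑ g ∈ S, Finsupp.lapply g ∘ₗ (coeffLinearEquiv k).toLinearMap

theorem coeffSum_apply (S : Finset G) (x : MonoidAlgebra k G) :
    coeffSum S x = ∑ g ∈ S, x.coeff g := by
  simp [coeffSum]

theorem coeffSum_single (S : Finset G) (g : G) (r : k) :
    coeffSum S (single g r) = if g ∈ S then r else 0 := by
  simp [coeffSum_apply, Finsupp.single_apply]

variable [Group G] {S : Finset G}

theorem coeff_mul_sum_of (hS : ∀ g ∈ S, g⁻¹ ∈ S) (a : MonoidAlgebra k G) (x : G) :
    (a * ∑ g ∈ S, of k G g).coeff x = coeffSum S (of k G x⁻¹ * a) := by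
  simp only [mul_sum, coeff_sum, Finsupp.coe_finsetSum, Finset.sum_apply, of_apply,
    coeff_mul_single_apply, mul_one, coeffSum_apply, coeff_single_mul_apply, one_mul, inv_inv]
  exact sum_nbij' (·⁻¹) (·⁻¹) hS hS (by simp) (by simp) (by simp)

theorem coeff_sum_of_mul (hS : ∀ g ∈ S, g⁻¹ ∈ S) (a : MonoidAlgebra k G) (x : G) :
    ((∑ g ∈ S, of k G g) * a).coeff x = coeffSum S (a * of k G x⁻¹) := by
  simp only [sum_mul, coeff_sum, Finsupp.coe_finsetSum, Finset.sum_apply, of_apply,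
    coeff_single_mul_apply, one_mul, coeffSum_apply, coeff_mul_single_apply, mul_one, inv_inv]
  exact sum_nbij' (·⁻¹) (·⁻¹) hS hS (by simp) (by simp) (by simp)

end Semiring

variable [Group G]

theorem coeffSum_mul_comm [CommSemiring k] {S : Finset G}
    (hS : ∀ x g, g ∈ S → x * g * x⁻¹ ∈ S) (a b : MonoidAlgebra k G) :
    coeffSum S (a * b) = coeffSum S (b * a) := by
  induction a using induction_on with
  | of g =>
    induction b using induction_on with
    | of h =>
      have : g * h ∈ S ↔ h * g ∈ S :=
        ⟨fun hgh => by simpa [mul_assoc] using hS h _ hgh,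
          fun hhg => by simpa [mul_assoc] using hS g _ hhg⟩
      simp [of_apply, coeffSum_single, this]
    | add x y hx hy => simp only [mul_add, add_mul, map_add, hx, hy]
    | smul r x hx => simp only [mul_smul_comm, smul_mul_assoc, map_smul, hx]
  | add x y hx hy => simp only [mul_add, add_mul, map_add, hx, hy]
  | smul r x hx => simp only [mul_smul_comm, smul_mul_assoc, map_smul, hx]

variable [Fintype G] [CommRing k] (p : ℕ) [hp : Fact p.Prime] [CharP k p]

theorem coeffSum_pow_char {S : Finset G} (hS : ∀ x g, g ∈ S → x * g * x⁻¹ ∈ S)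
    (β : MonoidAlgebra k G) : coeffSum S (β ^ p) = coeffSum {g | g ^ p ∈ S} β ^ p := by
  conv_lhs => rw [← sum_coeff_single β, Finsupp.sum_fintype _ _ (by simp)]
  rw [map_sum_pow_char_of_map_mul_comm p _ (coeffSum_mul_comm hS), coeffSum_apply, sum_pow_char]
  simp [single_pow, coeffSum_single, sum_filter]

theorem coeff_one_pow_prime_pow (n : ℕ) (β : MonoidAlgebra k G) :
    (β ^ p ^ n).coeff 1 = coeffSum {g | g ^ p ^ n = 1} β ^ p ^ n := by
  induction n generalizing β with
  | zero => simp [coeffSum_apply, sum_filter]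
  | succ n ih =>
    have hconj (x g : G) (hg : g ∈ ({g | g ^ p ^ n = 1} : Finset G)) :
        x * g * x⁻¹ ∈ ({g | g ^ p ^ n = 1} : Finset G) := by
      simp_all [conj_pow]
    rw [pow_succ', pow_mul, ih, coeffSum_pow_char p hconj, ← pow_mul, ← pow_succ']
    simp only [mem_filter, mem_univ, true_and, ← pow_mul, ← pow_succ']

theorem coeffSum_eq_zero_of_isNilpotent [IsReduced k] {β : MonoidAlgebra k G}
    (hβ : IsNilpotent β) : coeffSum {g | ∃ m, orderOf g = p ^ m} β = 0 := by
  obtain ⟨N, hG, hN⟩ := ((eventually_forall_pow_prime_pow_eq_one_iff (G := G) p).and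
    (hβ.eventually_pow_pow_eq_zero hp.out.one_lt)).exists
  have := coeff_one_pow_prime_pow p N β
  rw [hN, filter_congr fun g _ => hG g] at this
  exact IsReduced.eq_zero _ ⟨_, this.symm⟩

end MonoidAlgebra

open MonoidAlgebra in
/-- For a finite field `F` of characteristic `p` and finite group `G`, the Jacobson radical
`J(FG)` is contained in the two-sided annihilator of `s`, the sum of all `p`-elements of `G`
(including the identity). -/
theorem jacobson_subset_ann (F : Type*) [Field F] [Fintype F] (p : ℕ) [Fact p.Prime]
    [CharP F p] (G : Type*) [Group G] [Fintype G] :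
    ∀ α ∈ (⊥ : Ideal (MonoidAlgebra F G)).jacobson,
      α * (∑ g ∈ Finset.univ.filter (fun g : G => ∃ n : ℕ, orderOf g = p ^ n),
            MonoidAlgebra.of F G g) = 0 ∧
      (∑ g ∈ Finset.univ.filter (fun g : G => ∃ n : ℕ, orderOf g = p ^ n),
            MonoidAlgebra.of F G g) * α = 0 := by
  intro α hα
  set P : Finset G := {g | ∃ n, orderOf g = p ^ n}
  have hinv : ∀ g ∈ P, g⁻¹ ∈ P := by simp [P, orderOf_inv]
  have hconj : ∀ x g, g ∈ P → x * g * x⁻¹ ∈ P := by simp [P, ← MulAut.conj_apply]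
  have hvanish (x : G) : coeffSum P (of F G x * α) = 0 :=
    coeffSum_eq_zero_of_isNilpotent p (isNilpotent_of_mem_jacobson_bot (Ideal.mul_mem_left _ _ hα))
  refine ⟨ext <| Finsupp.ext fun x => ?_, ext <| Finsupp.ext fun x => ?_⟩
  · rw [coeff_mul_sum_of hinv, hvanish]
    rfl
  · rw [coeff_sum_of_mul hinv, coeffSum_mul_comm hconj, hvanish]
    rfl
end
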